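/- Let α ∈ (0,1] and let μ be a probability distribution on the k-element subsets of [n] that is α-fractionally log-concave. Then for every external field λ = (λ₁,…,λₙ) ∈ ℝ^n_{>0}, the distribution λ ∗ μ is (1/α)-entropically independent: for every probability distribution ν on the k-element subsets of [n] with supp(ν) ⊆ supp(λ ∗ μ), D(ν D_{k→1} ‖ (λ ∗ μ) D_{k→1}) ≤ (1/(αk))·D(ν ‖ λ ∗ μ). -/

import Mathlib

open Finset

/-- The generating polynomial `g_μ(z) = ∑_S μ(S) ∏_{i∈S} z_i`. -/
noncomputable def genPoly {n : ℕ} (μ : Finset (Fin n) → ℝ) (z : Fin n → ℝ) : ℝ :=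
  ∑ S : Finset (Fin n), μ S * ∏ i ∈ S, z i

/-- The external field `λ ∗ μ`, with `(λ ∗ μ)(S) ∝ μ(S) ∏_{i∈S} λ_i`. -/
noncomputable def extField {n : ℕ} (μ : Finset (Fin n) → ℝ) (lam : Fin n → ℝ)
    (S : Finset (Fin n)) : ℝ :=
  μ S * (∏ i ∈ S, lam i) / (∑ T : Finset (Fin n), μ T * ∏ i ∈ T, lam i)

/-- The `k → 1` down operator: `(ν D_{k→1})(i) = (1/k) ∑_{S ∋ i} ν(S)`. -/
noncomputable def down1 {n : ℕ} (k : ℕ) (ν : Finset (Fin n) → ℝ) (i : Fin n) : ℝ :=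
  (1 / (k : ℝ)) * ∑ S ∈ Finset.univ.filter (fun S => i ∈ S), ν S

/-- KL divergence `D(ν ‖ μ) = ∑_x ν(x) log (ν(x)/μ(x))` on a finite type. -/
noncomputable def KLdiv {X : Type*} [Fintype X] (ν μ : X → ℝ) : ℝ :=
  ∑ x : X, ν x * Real.log (ν x / μ x)

/-!
An external field only rescales the variables of `g_μ`, so it preserves `α`-fractional
log-concavity. For an `α`-FLC `μ` with marginal `q = μ D_{k→1}`, concavity of
`z ↦ log g_μ(z^α)` at `z = 1`, where its gradient is `α k q`, gives the tangent bound
`log g_μ(w^α) ≤ α k (⟨q, w⟩ - 1)`. The Donsker–Varadhan bound with the test function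
`S ↦ α ∑_{i ∈ S} log w_i` turns this into `α k (⟨p, log w⟩ - ⟨q, w⟩ + 1) ≤ D(ν ‖ μ)` with
`p = ν D_{k→1}`, and `w = p / q + c` with `c → 0` yields `α k D(p ‖ q) ≤ D(ν ‖ μ)`.
-/

open Real

lemma mul_log_div_le_sub {p y : ℝ} (hp : 0 ≤ p) (hy : 0 < y) : p * log (y / p) ≤ y - p := by
  rcases hp.eq_or_lt with rfl | hp
  · simpa using hy.le
  · calc p * log (y / p) ≤ p * (y / p - 1) := by
          gcongr; exact log_le_sub_one_of_pos (div_pos hy hp)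
      _ = y - p := by field_simp

theorem sum_mul_sub_log_sum_mul_exp_le_KLdiv {X : Type*} [Fintype X] {p q : X → ℝ}
    (hp0 : ∀ x, 0 ≤ p x) (hp1 : ∑ x, p x = 1) (hq0 : ∀ x, 0 ≤ q x)
    (hpq : ∀ x, q x = 0 → p x = 0) (f : X → ℝ) :
    ∑ x, p x * f x - log (∑ x, q x * exp (f x)) ≤ KLdiv p q := by
  have hq_pos : ∀ x, p x ≠ 0 → 0 < q x := fun x hx => (hq0 x).lt_of_ne' (mt (hpq x) hx)
  set Z := ∑ x, q x * exp (f x)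
  have hZ : 0 < Z := by
    obtain ⟨x, hx⟩ : ∃ x, p x ≠ 0 := by
      by_contra! h
      simp [h] at hp1
    exact sum_pos' (fun y _ => mul_nonneg (hq0 y) (exp_pos _).le)
      ⟨x, mem_univ x, mul_pos (hq_pos x hx) (exp_pos _)⟩
  have pointwise : ∀ x, p x * f x - p x * log Z - p x * log (p x / q x)
      ≤ q x * exp (f x) / Z - p x := by
    intro x
    by_cases hpx : p x = 0
    · simp only [hpx, zero_mul, sub_zero]
      exact div_nonneg (mul_nonneg (hq0 x) (exp_pos _).le) hZ.le
    have hqx := hq_pos x hpx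
    calc p x * f x - p x * log Z - p x * log (p x / q x)
        = p x * log (q x * exp (f x) / Z / p x) := by
          rw [log_div (by positivity) hpx, log_div (by positivity) hZ.ne', log_mul hqx.ne'
            (exp_pos _).ne', log_exp, log_div hpx hqx.ne']
          ring
      _ ≤ q x * exp (f x) / Z - p x := mul_log_div_le_sub (hp0 x) (by positivity)
  have hsum := sum_le_sum fun x (_ : x ∈ univ) => pointwise x
  rw [sum_sub_distrib, sum_sub_distrib, sum_sub_distrib, ← sum_mul, ← sum_div, hp1,
    div_self hZ.ne'] at hsum
  unfold KLdiv
  linarith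

section DownOperator

variable {n k : ℕ}

lemma down1_nonneg {f : Finset (Fin n) → ℝ} (hf : ∀ S, 0 ≤ f S) (i : Fin n) :
    0 ≤ down1 k f i :=
  mul_nonneg (by positivity) (sum_nonneg fun S _ => hf S)

lemma sum_mul_sum_eq_mul_sum_mul_down1 (hk : k ≠ 0) (f : Finset (Fin n) → ℝ)
    (a : Fin n → ℝ) :
    ∑ S, f S * ∑ i ∈ S, a i = k * ∑ i, a i * down1 k f i := by
  have hk' : (k : ℝ) ≠ 0 := Nat.cast_ne_zero.mpr hk
  calc ∑ S, f S * ∑ i ∈ S, a i = ∑ S, ∑ i, if i ∈ S then a i * f S else 0 := by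
        refine sum_congr rfl fun S _ => ?_
        rw [sum_ite_mem, univ_inter, mul_sum]
        exact sum_congr rfl fun i _ => mul_comm _ _
    _ = ∑ i, a i * ∑ S with i ∈ S, f S := by
        rw [sum_comm]
        exact sum_congr rfl fun i _ => by rw [← sum_filter, mul_sum]
    _ = k * ∑ i, a i * down1 k f i := by
        rw [mul_sum]
        refine sum_congr rfl fun i _ => ?_
        rw [down1]
        field_simp

lemma sum_down1 (hk : k ≠ 0) {f : Finset (Fin n) → ℝ} (hf : ∀ S, f S ≠ 0 → S.card = k)
    (hf1 : ∑ S, f S = 1) : ∑ i, down1 k f i = 1 := by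
  have hk' : (k : ℝ) ≠ 0 := Nat.cast_ne_zero.mpr hk
  refine mul_left_cancel₀ hk' ?_
  calc (k : ℝ) * ∑ i, down1 k f i = ∑ S, f S * ∑ i ∈ S, (1 : ℝ) := by
        simpa using (sum_mul_sum_eq_mul_sum_mul_down1 hk f fun _ => 1).symm
    _ = ∑ S, f S * k := sum_congr rfl fun S _ => by
        by_cases hS : f S = 0
        · simp [hS]
        · simp [hf S hS]
    _ = k * 1 := by rw [← sum_mul, hf1, one_mul, mul_one]

lemma down1_eq_zero_of_down1_eq_zero (hk : k ≠ 0) {f g : Finset (Fin n) → ℝ}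
    (hf : ∀ S, 0 ≤ f S) (hgf : ∀ S, f S = 0 → g S = 0) {i : Fin n} (hi : down1 k f i = 0) :
    down1 k g i = 0 := by
  rw [down1, mul_eq_zero, sum_eq_zero_iff_of_nonneg fun S _ => hf S] at hi
  rw [down1, sum_eq_zero fun S hS => hgf S ?_, mul_zero]
  exact hi.resolve_left (by simpa using hk) S hS

end DownOperator

section GeneratingPolynomial

variable {n : ℕ}

lemma genPoly_pos {μ : Finset (Fin n) → ℝ} (hμ0 : ∀ S, 0 ≤ μ S) (hμ : μ ≠ 0)
    {z : Fin n → ℝ} (hz : ∀ i, 0 < z i) : 0 < genPoly μ z := by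
  obtain ⟨S, hS⟩ : ∃ S, μ S ≠ 0 := Function.ne_iff.mp hμ
  exact sum_pos' (fun T _ => mul_nonneg (hμ0 T) (prod_nonneg fun i _ => (hz i).le))
    ⟨S, mem_univ S, mul_pos ((hμ0 S).lt_of_ne' hS) (prod_pos fun i _ => hz i)⟩

lemma genPoly_extField (μ : Finset (Fin n) → ℝ) (lam z : Fin n → ℝ) :
    genPoly (extField μ lam) z = genPoly μ (lam * z) / genPoly μ lam := by
  simp only [genPoly, extField, sum_div, Pi.mul_apply, prod_mul_distrib]
  exact sum_congr rfl fun S _ => by ring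

lemma extField_nonneg {μ : Finset (Fin n) → ℝ} (hμ0 : ∀ S, 0 ≤ μ S) {lam : Fin n → ℝ}
    (hlam : ∀ i, 0 < lam i) (S : Finset (Fin n)) : 0 ≤ extField μ lam S :=
  div_nonneg (mul_nonneg (hμ0 S) (prod_nonneg fun i _ => (hlam i).le))
    (sum_nonneg fun T _ => mul_nonneg (hμ0 T) (prod_nonneg fun i _ => (hlam i).le))

lemma ne_zero_of_extField_ne_zero {μ : Finset (Fin n) → ℝ} {lam : Fin n → ℝ}
    {S : Finset (Fin n)} (h : extField μ lam S ≠ 0) : μ S ≠ 0 :=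
  fun h0 => h (by simp [extField, h0])

lemma sum_extField {μ : Finset (Fin n) → ℝ} {lam : Fin n → ℝ} (h : genPoly μ lam ≠ 0) :
    ∑ S, extField μ lam S = 1 := by
  simp only [extField, ← sum_div]
  exact div_self h

lemma hasDerivAt_genPoly_one_add_mul_rpow (μ : Finset (Fin n) → ℝ) (v : Fin n → ℝ) (α : ℝ) :
    HasDerivAt (fun t : ℝ => genPoly μ fun i => (1 + t * v i) ^ α)
      (α * ∑ S, μ S * ∑ i ∈ S, v i) 0 := by
  have hfactor (i : Fin n) : HasDerivAt (fun t : ℝ => (1 + t * v i) ^ α) (α * v i) 0 := by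
    simpa [mul_comm α] using
      (((hasDerivAt_id (0 : ℝ)).mul_const (v i)).const_add 1).rpow_const (p := α)
        (Or.inl (by simp))
  have hterm (S : Finset (Fin n)) := ((HasDerivAt.fun_finsetProd (u := S)
    fun i _ => hfactor i).const_mul (μ S))
  simp only [zero_mul, add_zero, one_rpow, prod_const_one, one_smul] at hterm
  unfold genPoly
  refine (HasDerivAt.fun_sum fun S _ => hterm S).congr_deriv ?_
  rw [mul_sum]
  exact sum_congr rfl fun S _ => by rw [← mul_sum, mul_left_comm]

end GeneratingPolynomial

lemma ConcaveOn.le_add_of_hasDerivAt_lineMap {E : Type*} [AddCommGroup E] [Module ℝ E]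
    {s : Set E} {f : E → ℝ} (hf : ConcaveOn ℝ s f) {x y : E} (hx : x ∈ s) (hy : y ∈ s)
    {f' : ℝ} (hf' : HasDerivAt (fun t : ℝ => f (AffineMap.lineMap x y t)) f' 0) :
    f y ≤ f x + f' := by
  have h := (hf.comp_affineMap (AffineMap.lineMap x y)).slope_le_of_hasDerivAt
    (x := 0) (y := 1) (by simpa using hx) (by simpa using hy) one_pos hf'
  simp only [slope_def_field, Function.comp_apply, AffineMap.lineMap_apply_zero,
    AffineMap.lineMap_apply_one, sub_zero, div_one] at h
  linarith

def IsFractionallyLogConcave {n : ℕ} (α : ℝ) (μ : Finset (Fin n) → ℝ) : Prop :=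
  ConcaveOn ℝ {z : Fin n → ℝ | ∀ i, 0 < z i} fun z => log (genPoly μ fun i => z i ^ α)

namespace IsFractionallyLogConcave

variable {n k : ℕ} {α : ℝ} {μ : Finset (Fin n) → ℝ}

theorem log_genPoly_le (hμ : IsFractionallyLogConcave α μ) (hk : k ≠ 0)
    (hμk : ∀ S, μ S ≠ 0 → S.card = k) (hμ1 : ∑ S, μ S = 1) {w : Fin n → ℝ}
    (hw : ∀ i, 0 < w i) :
    log (genPoly μ fun i => w i ^ α) ≤ α * k * (∑ i, down1 k μ i * w i - 1) := by
  have hμ1' : genPoly μ (fun _ => 1) = 1 := by simp [genPoly, hμ1]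
  have hderiv : HasDerivAt (fun t => log (genPoly μ fun i => (1 + t * (w i - 1)) ^ α))
      (α * k * (∑ i, down1 k μ i * w i - 1)) 0 := by
    have h0 : (genPoly μ fun i => (1 + 0 * (w - 1) i) ^ α) = 1 := by simp [hμ1']
    have h := (hasDerivAt_genPoly_one_add_mul_rpow μ (w - 1) α).log (by simp [hμ1'])
    rw [h0, div_one, sum_mul_sum_eq_mul_sum_mul_down1 hk] at h
    refine h.congr_deriv ?_
    simp only [Pi.sub_apply, Pi.one_apply, sub_mul, sum_sub_distrib, one_mul,
      sum_down1 hk hμk hμ1, mul_comm (w _)]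
    ring
  have hline (t : ℝ) (i : Fin n) :
      AffineMap.lineMap (1 : Fin n → ℝ) w t i = 1 + t * (w i - 1) := by
    rw [AffineMap.lineMap_apply_module', Pi.add_apply, Pi.smul_apply, smul_eq_mul,
      Pi.sub_apply, Pi.one_apply, add_comm]
  have h := ConcaveOn.le_add_of_hasDerivAt_lineMap hμ (x := 1) (fun _ => one_pos) hw
    (by simpa only [hline] using hderiv)
  simpa [hμ1'] using h

theorem extField (hμ : IsFractionallyLogConcave α μ) (hα : α ≠ 0) (hμ0 : ∀ S, 0 ≤ μ S)
    (hμ_ne : μ ≠ 0) {lam : Fin n → ℝ} (hlam : ∀ i, 0 < lam i) :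
    IsFractionallyLogConcave α (extField μ lam) := by
  set u : Fin n → ℝ := fun i => lam i ^ α⁻¹
  have hu (i : Fin n) : 0 < u i := rpow_pos_of_pos (hlam i) _
  have hpre :
      LinearMap.mulLeft ℝ u ⁻¹' {z : Fin n → ℝ | ∀ i, 0 < z i} = {z | ∀ i, 0 < z i} := by
    ext z
    simp [mul_pos_iff_of_pos_left (hu _)]
  have h := (ConcaveOn.comp_linearMap hμ (LinearMap.mulLeft ℝ u)).add_const
    (-log (genPoly μ lam))
  rw [hpre] at h
  refine h.congr fun z hz => ?_
  have hscale (i : Fin n) : (u i * z i) ^ α = lam i * z i ^ α := by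
    rw [mul_rpow (hu i).le (hz i).le, rpow_inv_rpow (hlam i).le hα]
  have hpos : 0 < genPoly μ (lam * fun i => z i ^ α) :=
    genPoly_pos hμ0 hμ_ne fun i => mul_pos (hlam i) (rpow_pos_of_pos (hz i) α)
  show log (genPoly μ fun i => (u i * z i) ^ α) + -log (genPoly μ lam) = _
  rw [genPoly_extField, log_div hpos.ne' (genPoly_pos hμ0 hμ_ne hlam).ne', sub_eq_add_neg]
  simp only [hscale]
  rfl

theorem mul_sum_mul_log_sub_le_KLdiv (hμ : IsFractionallyLogConcave α μ) (hk : k ≠ 0)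
    (hμ0 : ∀ S, 0 ≤ μ S) (hμk : ∀ S, μ S ≠ 0 → S.card = k) (hμ1 : ∑ S, μ S = 1)
    {ν : Finset (Fin n) → ℝ} (hν0 : ∀ S, 0 ≤ ν S) (hν1 : ∑ S, ν S = 1)
    (hνμ : ∀ S, μ S = 0 → ν S = 0) {w : Fin n → ℝ} (hw : ∀ i, 0 < w i) :
    α * k * (∑ i, down1 k ν i * log (w i) - (∑ i, down1 k μ i * w i - 1)) ≤ KLdiv ν μ := by
  have hdv := sum_mul_sub_log_sum_mul_exp_le_KLdiv hν0 hν1 hμ0 hνμ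
    fun S => α * ∑ i ∈ S, log (w i)
  have hexp : ∑ S, μ S * exp (α * ∑ i ∈ S, log (w i)) = genPoly μ fun i => w i ^ α := by
    refine sum_congr rfl fun S _ => ?_
    rw [mul_sum, exp_sum]
    exact congrArg _ (prod_congr rfl fun i _ => show _ = w i ^ α by
      rw [rpow_def_of_pos (hw i), mul_comm])
  have hlin :
      ∑ S, ν S * (α * ∑ i ∈ S, log (w i)) = α * k * ∑ i, down1 k ν i * log (w i) := by
    simp_rw [mul_left_comm _ α, ← mul_sum, sum_mul_sum_eq_mul_sum_mul_down1 hk,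
      mul_comm (log _)]
    ring
  rw [hexp, hlin] at hdv
  have := hμ.log_genPoly_le hk hμk hμ1 hw
  rw [mul_sub]
  linarith

theorem mul_KLdiv_down1_le (hμ : IsFractionallyLogConcave α μ) (hα : 0 < α) (hk : k ≠ 0)
    (hμ0 : ∀ S, 0 ≤ μ S) (hμk : ∀ S, μ S ≠ 0 → S.card = k) (hμ1 : ∑ S, μ S = 1)
    {ν : Finset (Fin n) → ℝ} (hν0 : ∀ S, 0 ≤ ν S) (hνk : ∀ S, ν S ≠ 0 → S.card = k)
    (hν1 : ∑ S, ν S = 1) (hνμ : ∀ S, μ S = 0 → ν S = 0) :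
    α * k * KLdiv (down1 k ν) (down1 k μ) ≤ KLdiv ν μ := by
  set p := down1 k ν
  set q := down1 k μ
  have hpq (i : Fin n) : q i = 0 → p i = 0 := down1_eq_zero_of_down1_eq_zero hk hμ0 hνμ
  have hαk : 0 < α * k := by positivity
  refine le_of_forall_pos_le_add fun ε hε => ?_
  set c := ε / (α * k)
  -- `p i / q i` is junk where `q i = 0`, but there `p i = 0` as well
  set w : Fin n → ℝ := fun i => p i / q i + c
  have hw (i : Fin n) : 0 < w i :=
    add_pos_of_nonneg_of_pos (div_nonneg (down1_nonneg hν0 i) (down1_nonneg hμ0 i))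
      (div_pos hε hαk)
  have hqw : ∑ i, q i * w i = 1 + c := by
    have hp1 : ∑ i, p i = 1 := sum_down1 hk hνk hν1
    have hq1 : ∑ i, q i = 1 := sum_down1 hk hμk hμ1
    simp only [w, mul_add, sum_add_distrib, ← sum_mul, hq1, one_mul]
    rw [← hp1]
    refine congrArg (· + c) (sum_congr rfl fun i _ => ?_)
    by_cases h : q i = 0
    · rw [h, zero_mul, hpq i h]
    · exact mul_div_cancel₀ _ h
  have hKL : KLdiv p q ≤ ∑ i, p i * log (w i) := by
    refine sum_le_sum fun i _ => ?_
    rcases (show 0 ≤ p i from down1_nonneg hν0 i).eq_or_lt with h | h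
    · simp [← h]
    · have hqi : 0 < q i := (down1_nonneg hμ0 i).lt_of_ne' fun h' => h.ne' (hpq i h')
      exact mul_le_mul_of_nonneg_left
        (log_le_log (div_pos h hqi) (le_add_of_nonneg_right (div_pos hε hαk).le)) h.le
  have hvar := hμ.mul_sum_mul_log_sub_le_KLdiv hk hμ0 hμk hμ1 hν0 hν1 hνμ hw
  rw [hqw, add_sub_cancel_left, mul_sub, mul_div_cancel₀ _ hαk.ne'] at hvar
  calc α * k * KLdiv p q ≤ α * k * ∑ i, p i * log (w i) := by gcongr
    _ ≤ KLdiv ν μ + ε := by linarith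

end IsFractionallyLogConcave

theorem stmt_5_general (n k : ℕ) (α : ℝ) (hα0 : 0 < α)
    (μ : Finset (Fin n) → ℝ)
    (hμ0 : ∀ S, 0 ≤ μ S)
    (hμk : ∀ S, μ S ≠ 0 → S.card = k)
    (hμ1 : ∑ S : Finset (Fin n), μ S = 1)
    (hFLC : ConcaveOn ℝ {z : Fin n → ℝ | ∀ i, 0 < z i}
      (fun z => Real.log (genPoly μ (fun i => z i ^ α)))) :
    ∀ lam : Fin n → ℝ, (∀ i, 0 < lam i) →
      ∀ ν : Finset (Fin n) → ℝ,
        (∀ S, 0 ≤ ν S) → (∀ S, ν S ≠ 0 → S.card = k) →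
        (∑ S : Finset (Fin n), ν S = 1) →
        (∀ S, extField μ lam S = 0 → ν S = 0) →
        KLdiv (down1 k ν) (down1 k (extField μ lam)) ≤
          (1 / (α * (k : ℝ))) * KLdiv ν (extField μ lam) := by
  intro lam hlam ν hν0 hνk hν1 hνμ
  rcases eq_or_ne k 0 with rfl | hk
  · simp [KLdiv, down1]
  have hμ_ne : μ ≠ 0 := fun h => by simp [h] at hμ1
  have hFLC_ext : IsFractionallyLogConcave α (extField μ lam) :=
    IsFractionallyLogConcave.extField hFLC hα0.ne' hμ0 hμ_ne hlam
  have h := hFLC_ext.mul_KLdiv_down1_le hα0 hk (extField_nonneg hμ0 hlam)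
    (fun S hS => hμk S (ne_zero_of_extField_ne_zero hS))
    (sum_extField (genPoly_pos hμ0 hμ_ne hlam).ne') hν0 hνk hν1 hνμ
  rw [one_div_mul_eq_div, le_div_iff₀' (by positivity)]
  exact h

theorem stmt_5 (n k : ℕ) (α : ℝ) (hα0 : 0 < α) (hα1 : α ≤ 1)
    (μ : Finset (Fin n) → ℝ)
    (hμ0 : ∀ S, 0 ≤ μ S)
    (hμk : ∀ S, μ S ≠ 0 → S.card = k)
    (hμ1 : ∑ S : Finset (Fin n), μ S = 1)
    (hFLC : ConcaveOn ℝ {z : Fin n → ℝ | ∀ i, 0 < z i}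
      (fun z => Real.log (genPoly μ (fun i => z i ^ α)))) :
    ∀ lam : Fin n → ℝ, (∀ i, 0 < lam i) →
      ∀ ν : Finset (Fin n) → ℝ,
        (∀ S, 0 ≤ ν S) → (∀ S, ν S ≠ 0 → S.card = k) →
        (∑ S : Finset (Fin n), ν S = 1) →
        (∀ S, extField μ lam S = 0 → ν S = 0) →
        KLdiv (down1 k ν) (down1 k (extField μ lam)) ≤
          (1 / (α * (k : ℝ))) * KLdiv ν (extField μ lam) :=
  stmt_5_general n k α hα0 μ hμ0 hμk hμ1 hFLC
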